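/- Let E₁ and E₂ be directed graphs with free path groupoids G₁ = G(E₁) and G₂ = G(E₂), and let h : Arr(G₁) → Arr(G₂) be a groupoid homomorphism whose restriction to W₁ := W(E₁) is injective and which satisfies h(W₁) = W₂ := W(E₂). Then h preserves path length: for every finite path p in E₁ (a path in the path category Paths(E₁)), there exists a finite path q in E₂ with length(q) = length(p) and h(⟦p⟧) = ⟦q⟧. -/

import Mathlib

open CategoryTheory

universe u v u' v'

/-- The set of arrows of a groupoid. -/
abbrev Arr (C : Type u) [Groupoid.{v} C] : Type (max u v) := Σ (x y : C), x ⟶ y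

/-- Two arrows `g₁ : x ⟶ y` and `g₂ : z ⟶ w` are composable if `y = z`. -/
def Arr.Composable {C : Type u} [Groupoid.{v} C] (g₁ g₂ : Arr C) : Prop := g₁.2.1 = g₂.1

/-- Composition of composable arrows. -/
def Arr.comp {C : Type u} [Groupoid.{v} C] (g₁ g₂ : Arr C) (h : g₁.Composable g₂) : Arr C :=
  ⟨g₁.1, g₂.2.1, g₁.2.2 ≫ eqToHom h ≫ g₂.2.2⟩

/-- The identity arrow at an object. -/
def idArr {C : Type u} [Groupoid.{v} C] (x : C) : Arr C := ⟨x, x, 𝟙 x⟩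

/-- Inverse of an arrow. -/
def Arr.inv {C : Type u} [Groupoid.{v} C] (g : Arr C) : Arr C :=
  ⟨g.2.1, g.1, Groupoid.inv g.2.2⟩

/-- A groupoid homomorphism, as a map on arrows preserving composability and composition. -/
def IsGroupoidHom {C : Type u} {D : Type u'} [Groupoid.{v} C] [Groupoid.{v'} D]
    (h : Arr C → Arr D) : Prop :=
  ∀ g₁ g₂ : Arr C, ∀ hc : g₁.Composable g₂,
    ∃ hc' : (h g₁).Composable (h g₂), h (g₁.comp g₂ hc) = (h g₁).comp (h g₂) hc'

/-- The arrow of the free groupoid associated to a path in the quiver `V`;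
this is the image of `p` under the canonical functor `Paths V ⥤ FreeGroupoid V`
extending the inclusion of `V`. -/
def pathArrow (V : Type u) [Quiver.{v + 1} V] {x y : V} (p : Quiver.Path x y) :
    Arr (Quiver.FreeGroupoid V) :=
  ⟨(Quiver.FreeGroupoid.of V).obj x, (Quiver.FreeGroupoid.of V).obj y,
    composePath ((Quiver.FreeGroupoid.of V).mapPath p)⟩

/-- The set `W(E)` of arrows of `FreeGroupoid V` that are images of finite paths of `V`. -/
def WSet (V : Type u) [Quiver.{v + 1} V] : Set (Arr (Quiver.FreeGroupoid V)) :=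
  {a | ∃ (x y : V) (p : Quiver.Path x y), a = pathArrow V p}
/-!
Counting edges defines a length `arrowLength` on the arrows of a free groupoid: it is additive
under composition, equals the path length on `W(E)`, and on `W(E)` vanishes exactly at the
identities. A groupoid homomorphism sends identities to identities, and being injective on `W₁`,
which contains all identities, it also reflects them. So every edge is sent to a path of positive
length, and additivity gives `length p ≤ length (h p)`; dually, lifting a path of `E₂` edge by
edge through the bijection `W₁ → W₂` gives the reverse inequality.
-/


namespace Arr

variable {C : Type u} [Groupoid.{v} C]

theorem idArr_comp (a : Arr C) (hc : (idArr a.1).Composable a) :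
    (idArr a.1).comp a hc = a := by
  obtain ⟨x, y, f⟩ := a
  simp [idArr, Arr.comp]

theorem eq_idArr_of_comp_self {a : Arr C} (hc : a.Composable a) (he : a.comp a hc = a) :
    a = idArr a.1 := by
  obtain ⟨x, y, f⟩ := a
  obtain rfl : y = x := hc
  have hff : f ≫ f = f := by simpa [Arr.comp] using he
  have hf : f = 𝟙 y := (cancel_mono f).mp (by rw [hff, Category.id_comp])
  rw [hf]
  rfl

end Arr

namespace IsGroupoidHom

variable {C : Type u} [Groupoid.{v} C] {D : Type u'} [Groupoid.{v'} D] {h : Arr C → Arr D}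

theorem map_idArr (hhom : IsGroupoidHom h) (x : C) : h (idArr x) = idArr (h (idArr x)).1 := by
  obtain ⟨hc, hcomp⟩ := hhom (idArr x) (idArr x) rfl
  have hidem : (h (idArr x)).comp (h (idArr x)) hc = h (idArr x) :=
    hcomp.symm.trans (congrArg h (Arr.idArr_comp (idArr x) rfl))
  exact Arr.eq_idArr_of_comp_self hc hidem

theorem map_idArr_source (hhom : IsGroupoidHom h) (a : Arr C) :
    h (idArr a.1) = idArr (h a).1 := by
  obtain ⟨hc, -⟩ := hhom (idArr a.1) a rfl
  have hid := hhom.map_idArr a.1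
  rw [hid] at hc
  rw [hid]
  exact congrArg idArr hc

theorem map_idArr_target (hhom : IsGroupoidHom h) (a : Arr C) :
    h (idArr a.2.1) = idArr (h a).2.1 := by
  obtain ⟨hc, -⟩ := hhom a (idArr a.2.1) rfl
  rw [hhom.map_idArr a.2.1]
  exact congrArg idArr hc.symm

end IsGroupoidHom

section FreeGroupoid

variable {V : Type u} [Quiver.{v + 1} V]

variable (V) in
def lengthPrefunctor : V ⥤q SingleObj (Multiplicative ℤ) where
  obj _ := SingleObj.star _
  map _ := Multiplicative.ofAdd 1

def arrowLength (a : Arr (Quiver.FreeGroupoid V)) : ℤ :=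
  Multiplicative.toAdd ((Quiver.FreeGroupoid.lift (lengthPrefunctor V)).map a.2.2)

theorem arrowLength_comp (a b : Arr (Quiver.FreeGroupoid V)) (hc : a.Composable b) :
    arrowLength (a.comp b hc) = arrowLength a + arrowLength b := by
  obtain ⟨x, y, f⟩ := a
  obtain ⟨z, w, g⟩ := b
  obtain rfl : y = z := hc
  simp only [arrowLength, Arr.comp, eqToHom_refl, Category.id_comp, Functor.map_comp,
    SingleObj.comp_as_mul]
  exact (toAdd_mul _ _).trans (add_comm _ _)

theorem arrowLength_idArr (z : Quiver.FreeGroupoid V) : arrowLength (idArr z) = 0 := by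
  show Multiplicative.toAdd ((Quiver.FreeGroupoid.lift (lengthPrefunctor V)).map (𝟙 z)) = 0
  rw [CategoryTheory.Functor.map_id]
  rfl

theorem pathArrow_comp {x y z : V} (p : Quiver.Path x y) (q : Quiver.Path y z)
    (hc : (pathArrow V p).Composable (pathArrow V q)) :
    (pathArrow V p).comp (pathArrow V q) hc = pathArrow V (p.comp q) := by
  -- `eqToHom_refl` does not see through the type `Composable` of `hc`
  change (⟨_, _, _ ≫ eqToHom (rfl : (Quiver.FreeGroupoid.of V).obj y = _) ≫ _⟩ : Arr _) = _
  simp only [pathArrow, eqToHom_refl, Category.id_comp, Prefunctor.mapPath_comp, composePath_comp]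

theorem arrowLength_pathArrow {x y : V} (p : Quiver.Path x y) :
    arrowLength (pathArrow V p) = p.length := by
  induction p with
  | nil => exact arrowLength_idArr _
  | cons p e ih =>
    have hc : (pathArrow V p).Composable (pathArrow V e.toPath) := rfl
    rw [← Quiver.Path.comp_toPath_eq_cons, ← pathArrow_comp p e.toPath hc, arrowLength_comp, ih]
    rfl

theorem pathArrow_toPath_ne_idArr {x y : V} (e : x ⟶ y) (z : Quiver.FreeGroupoid V) :
    pathArrow V e.toPath ≠ idArr z := by
  intro he
  have := congrArg arrowLength he
  rw [arrowLength_pathArrow, arrowLength_idArr] at this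
  exact one_ne_zero this

theorem idArr_mem_WSet (z : Quiver.FreeGroupoid V) : idArr z ∈ WSet V :=
  ⟨z.as, z.as, .nil, rfl⟩

theorem comp_mem_WSet {a b : Arr (Quiver.FreeGroupoid V)} (ha : a ∈ WSet V) (hb : b ∈ WSet V)
    (hc : a.Composable b) : a.comp b hc ∈ WSet V := by
  obtain ⟨x, y, p, rfl⟩ := ha
  obtain ⟨y', z, q, rfl⟩ := hb
  obtain rfl : y = y' := by injection hc
  exact ⟨x, z, p.comp q, pathArrow_comp p q hc⟩

theorem arrowLength_nonneg {a : Arr (Quiver.FreeGroupoid V)} (ha : a ∈ WSet V) :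
    0 ≤ arrowLength a := by
  obtain ⟨x, y, p, rfl⟩ := ha
  rw [arrowLength_pathArrow]
  exact Int.natCast_nonneg _

theorem arrowLength_pos {a : Arr (Quiver.FreeGroupoid V)} (ha : a ∈ WSet V)
    (hne : a ≠ idArr a.1) : 0 < arrowLength a := by
  obtain ⟨x, y, p, rfl⟩ := ha
  rw [arrowLength_pathArrow, Nat.cast_pos, Nat.pos_iff_ne_zero]
  intro hp
  obtain rfl := Quiver.Path.eq_of_length_zero p hp
  obtain rfl := Quiver.Path.eq_nil_of_length_zero p hp
  exact hne rfl

end FreeGroupoid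

namespace IsGroupoidHom

variable {V₁ : Type u} [Quiver.{v + 1} V₁] {V₂ : Type u'} [Quiver.{v' + 1} V₂]
  {h : Arr (Quiver.FreeGroupoid V₁) → Arr (Quiver.FreeGroupoid V₂)}

theorem eq_idArr_of_map_eq_idArr (hhom : IsGroupoidHom h) (hinj : Set.InjOn h (WSet V₁))
    {a : Arr (Quiver.FreeGroupoid V₁)} (ha : a ∈ WSet V₁) {z : Quiver.FreeGroupoid V₂}
    (hz : h a = idArr z) : a = idArr a.1 :=
  hinj ha (idArr_mem_WSet _) (by rw [hhom.map_idArr_source, hz]; rfl)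

theorem composable_of_map_composable (hhom : IsGroupoidHom h) (hinj : Set.InjOn h (WSet V₁))
    {s t : Arr (Quiver.FreeGroupoid V₁)} (hc : (h s).Composable (h t)) : s.Composable t := by
  have hid : idArr s.2.1 = idArr t.1 := hinj (idArr_mem_WSet _) (idArr_mem_WSet _) (by
    rw [hhom.map_idArr_target, hhom.map_idArr_source]
    exact congrArg idArr hc)
  exact congrArg Sigma.fst hid

theorem arrowLength_map_pathArrow_toPath_pos (hhom : IsGroupoidHom h)
    (hinj : Set.InjOn h (WSet V₁)) (hmaps : Set.MapsTo h (WSet V₁) (WSet V₂))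
    {x y : V₁} (e : x ⟶ y) : 0 < arrowLength (h (pathArrow V₁ e.toPath)) := by
  have he : pathArrow V₁ e.toPath ∈ WSet V₁ := ⟨x, y, e.toPath, rfl⟩
  refine arrowLength_pos (hmaps he) fun hid => ?_
  exact pathArrow_toPath_ne_idArr e _ (hhom.eq_idArr_of_map_eq_idArr hinj he hid)

theorem length_le_arrowLength_map (hhom : IsGroupoidHom h) (hinj : Set.InjOn h (WSet V₁))
    (hmaps : Set.MapsTo h (WSet V₁) (WSet V₂)) {x y : V₁} (p : Quiver.Path x y) :
    (p.length : ℤ) ≤ arrowLength (h (pathArrow V₁ p)) := by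
  induction p with
  | nil => exact arrowLength_nonneg (hmaps ⟨_, _, .nil, rfl⟩)
  | cons p e ih =>
    have hc : (pathArrow V₁ p).Composable (pathArrow V₁ e.toPath) := rfl
    obtain ⟨_, hcomp⟩ := hhom _ _ hc
    have he := hhom.arrowLength_map_pathArrow_toPath_pos hinj hmaps e
    rw [← Quiver.Path.comp_toPath_eq_cons, ← pathArrow_comp p e.toPath hc, hcomp,
      arrowLength_comp, Quiver.Path.length_comp, Quiver.Path.length_toPath]
    push_cast
    linarith

theorem length_le_arrowLength_of_map_eq (hhom : IsGroupoidHom h) (hinj : Set.InjOn h (WSet V₁))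
    (hsurj : Set.SurjOn h (WSet V₁) (WSet V₂)) {x' y' : V₂} (q : Quiver.Path x' y') :
    ∀ a ∈ WSet V₁, h a = pathArrow V₂ q → (q.length : ℤ) ≤ arrowLength a := by
  induction q with
  | nil => exact fun a ha _ => arrowLength_nonneg ha
  | cons q f ih =>
    intro a ha hqa
    obtain ⟨s, hs, hsq⟩ := hsurj ⟨_, _, q, rfl⟩
    obtain ⟨t, ht, htf⟩ := hsurj ⟨_, _, f.toPath, rfl⟩
    have hst : s.Composable t := hhom.composable_of_map_composable hinj (by rw [hsq, htf]; rfl)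
    obtain ⟨_, hcomp⟩ := hhom s t hst
    have hqf : (pathArrow V₂ q).Composable (pathArrow V₂ f.toPath) := rfl
    have ha_eq : a = s.comp t hst := hinj ha (comp_mem_WSet hs ht hst) (by
      rw [hqa, hcomp, ← Quiver.Path.comp_toPath_eq_cons, ← pathArrow_comp q f.toPath hqf]
      simp only [hsq, htf])
    have ht_pos : 0 < arrowLength t := arrowLength_pos ht fun htid =>
      pathArrow_toPath_ne_idArr f _ (by rw [← htf, htid, hhom.map_idArr])
    have hs_len := ih s hs hsq
    rw [ha_eq, arrowLength_comp, Quiver.Path.length_cons]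
    push_cast
    linarith

end IsGroupoidHom

/-- If a groupoid homomorphism between free path groupoids is injective on `W(E₁)` and maps
`W(E₁)` onto `W(E₂)`, then it preserves path length: the image of (the class of) a finite
path `p` of `E₁` is the class of a finite path of `E₂` of the same length. -/
theorem groupoidHom_preserves_length
    (V₁ : Type u) [Quiver.{v + 1} V₁] (V₂ : Type u') [Quiver.{v' + 1} V₂]
    (h : Arr (Quiver.FreeGroupoid V₁) → Arr (Quiver.FreeGroupoid V₂)) (hhom : IsGroupoidHom h)
    (hinj : Set.InjOn h (WSet V₁)) (himg : h '' WSet V₁ = WSet V₂) :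
    ∀ (x y : V₁) (p : Quiver.Path x y),
      ∃ (x' y' : V₂) (q : Quiver.Path x' y'),
        q.length = p.length ∧ h (pathArrow V₁ p) = pathArrow V₂ q := by
  intro x y p
  have hp : pathArrow V₁ p ∈ WSet V₁ := ⟨x, y, p, rfl⟩
  obtain ⟨x', y', q, hq⟩ : h (pathArrow V₁ p) ∈ WSet V₂ := himg ▸ Set.mem_image_of_mem h hp
  refine ⟨x', y', q, ?_, hq⟩
  have hle := hhom.length_le_arrowLength_map hinj (himg ▸ Set.mapsTo_image h _) p
  have hge := hhom.length_le_arrowLength_of_map_eq hinj (himg ▸ Set.surjOn_image h _) q _ hp hq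
  rw [hq, arrowLength_pathArrow] at hle
  rw [arrowLength_pathArrow] at hge
  omega
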